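/- Let {Π_i}_{i∈I} be a finite family of orthogonal projections on a Hilbert space indexed by an abelian group I. Then ‖Σ_{i∈I} Π_i‖ ≤ Σ_{δ∈I} max_{i∈I} ‖Π_i Π_{i+δ}‖. -/

import Mathlib

open Matrix BigOperators Kronecker
open scoped ComplexOrder

/-- Operator (spectral) norm of a complex matrix. -/
noncomputable def opNorm {E : Type} [Fintype E] [DecidableEq E] (A : Matrix E E ℂ) : ℝ :=
  ‖(Matrix.toEuclideanCLM (𝕜 := ℂ) A : EuclideanSpace ℂ E →L[ℂ] EuclideanSpace ℂ E)‖

/-- An orthogonal projection. -/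
def IsProjection {E : Type} [Fintype E] [DecidableEq E] (P : Matrix E E ℂ) : Prop :=
  P.IsHermitian ∧ P * P = P

/-- A cq-state, given as the family of (subnormalized) conditional operators
`ρ x = P_X(x) • ρ_E^x`; each is PSD and the traces sum to 1. -/
def IsCQState {X E : Type} [Fintype X] [Fintype E] (ρ : X → Matrix E E ℂ) : Prop :=
  (∀ x, (ρ x).PosSemidef) ∧ ∑ x, (ρ x).trace = 1

/-- A POVM with outcomes in `X` on the system `E`. -/
def IsPOVM {X E : Type} [Fintype X] [Fintype E] [DecidableEq E] (M : X → Matrix E E ℂ) : Prop :=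
  (∀ x, (M x).PosSemidef) ∧ ∑ x, M x = 1

/-- The guessing probability `Guess(X|E)` of the classical value of a cq-state:
the supremum over POVMs of the probability of the measurement outcome being `X`. -/
noncomputable def guessProb {X E : Type} [Fintype X] [Fintype E] [DecidableEq E]
    (ρ : X → Matrix E E ℂ) : ℝ :=
  sSup {g | ∃ M : X → Matrix E E ℂ, IsPOVM M ∧ g = (∑ x, (M x * ρ x).trace).re}

/-- The guessing probability `Guess(X|ZE)` with additional classical side information `Z`:
the supremum over measurements of `E` controlled by `Z`. -/
noncomputable def guessProbC {X Z E : Type} [Fintype X] [Fintype Z] [Fintype E] [DecidableEq E]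
    (ρ : X → Z → Matrix E E ℂ) : ℝ :=
  sSup {g | ∃ M : Z → X → Matrix E E ℂ, (∀ z, IsPOVM (M z)) ∧
    g = (∑ x, ∑ z, (M z x * ρ x z).trace).re}

/-- Trace norm `‖A‖₁ = tr √(AᴴA)`. -/
noncomputable def traceNorm {E : Type} [Fintype E] [DecidableEq E] (A : Matrix E E ℂ) : ℝ :=
  (((Matrix.posSemidef_conjTranspose_mul_self A).1.eigenvectorUnitary : Matrix E E ℂ) *
    Matrix.diagonal (fun i => ((√((Matrix.posSemidef_conjTranspose_mul_self A).1.eigenvalues i) : ℝ) : ℂ)) *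
    (star (Matrix.posSemidef_conjTranspose_mul_self A).1.eigenvectorUnitary : Matrix E E ℂ)).trace.re

/-- A CPTP map between matrix algebras: completely positive (all finite ampliations
are positivity-preserving) and trace-preserving. -/
def IsCPTP {E F : Type} [Fintype E] [DecidableEq E] [Fintype F] [DecidableEq F]
    (Q : Matrix E E ℂ →ₗ[ℂ] Matrix F F ℂ) : Prop :=
  (∀ k : ℕ, ∀ ρ : Matrix (E × Fin k) (E × Fin k) ℂ, ρ.PosSemidef →
    (Matrix.of fun p q : F × Fin k =>
      Q (Matrix.of fun a b => ρ (a, p.2) (b, q.2)) p.1 q.1).PosSemidef) ∧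
  ∀ ρ, (Q ρ).trace = ρ.trace

/-- The BB84 state vector `H^θ |x⟩` on `n` qubits. -/
noncomputable def bb84v {n : ℕ} (θ x : Fin n → ZMod 2) : (Fin n → ZMod 2) → ℂ :=
  fun y => ∏ i, (if θ i = 0 then (if y i = x i then 1 else 0)
    else ((-1 : ℂ) ^ ((x i).val * (y i).val) / Real.sqrt 2))

/-- The rank-one projection `H^θ |x⟩⟨x| H^θ`. -/
noncomputable def bb84proj {n : ℕ} (θ x : Fin n → ZMod 2) :
    Matrix (Fin n → ZMod 2) (Fin n → ZMod 2) ℂ :=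
  Matrix.vecMulVec (bb84v θ x) (fun y => star (bb84v θ x y))

/-- Partial trace over the first tensor factor. -/
noncomputable def ptr {A B : Type} [Fintype A] (M : Matrix (A × B) (A × B) ℂ) :
    Matrix B B ℂ :=
  Matrix.of fun b b' => ∑ a, M (a, b) (a, b')

/-- The Hamming ball of radius `φ·n` around `0` in `{0,1}^n`. -/
noncomputable def hammingBall (n : ℕ) (φ : ℝ) : Finset (Fin n → ZMod 2) :=
  @Finset.filter _ (fun e => (hammingDist e (0 : Fin n → ZMod 2) : ℝ) ≤ φ * n)
    (Classical.decPred _) Finset.univ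

/-- Binary entropy in bits. -/
noncomputable def binEnt (φ : ℝ) : ℝ := Real.binEntropy φ / Real.log 2

/-- Message-independence of a keyed hash function: the distribution of `H(K,x)` for
uniform `K` does not depend on `x`. -/
def MessageIndependent {K X Y : Type} [Fintype K] [DecidableEq Y] (H : K → X → Y) : Prop :=
  ∀ x x' y, (Finset.univ.filter fun k => H k x = y).card =
    (Finset.univ.filter fun k => H k x' = y).card

/-- Uniformity: `H(K,x)` is uniformly distributed on `Y`, independently of `x`. -/
def UniformHash {K X Y : Type} [Fintype K] [Fintype Y] [DecidableEq Y] (H : K → X → Y) : Prop :=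
  (∀ x x' y, (Finset.univ.filter fun k => H k x = y).card =
    (Finset.univ.filter fun k => H k x' = y).card) ∧
  ∀ x y, (Finset.univ.filter fun k => H k x = y).card * Fintype.card Y = Fintype.card K

/-- `δ(K, U_K | Y E)`: trace distance of a ccq-state `ρ_{KYE}` (classical `K`, `Y`) from the
corresponding state with `K` replaced by a fresh uniform key. -/
noncomputable def deltaKeyUniform {K Y E : Type} [Fintype K] [Fintype Y] [Fintype E]
    [DecidableEq E] (ρ : K → Y → Matrix E E ℂ) : ℝ :=
  (1/2) * ∑ k : K, ∑ y : Y, traceNorm (ρ k y - (Fintype.card K : ℝ)⁻¹ • ∑ k', ρ k' y)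

/-- `ν`-key-privacy of a keyed hash function `H`: for every state `ρ_{KXYE}` with
`ρ_{KX} = μ_K ⊗ ρ_X`, `Y = H(K,X)` and Markov chain `K ↔ XY ↔ E`,
the key is `ν/2·√(Guess(X|YE)·|Y|)`-close to uniform given `Y` and `E`. -/
def KeyPrivacy {K X Y : Type} [Fintype K] [Fintype X] [Fintype Y] [DecidableEq Y]
    (ν : ℝ) (H : K → X → Y) : Prop :=
  ∀ (E : Type) [Fintype E] [DecidableEq E], ∀ ρ : K → X → Matrix E E ℂ,
    (∀ k x, (ρ k x).PosSemidef) →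
    (∑ k, ∑ x, (ρ k x).trace) = 1 →
    (∀ k x, (ρ k x).trace = (Fintype.card K : ℂ)⁻¹ * ∑ k', (ρ k' x).trace) →
    (∃ (p : K → X → ℝ) (σ : X → Y → Matrix E E ℂ), (∀ k x, 0 ≤ p k x) ∧
      ∀ k x, ρ k x = p k x • σ x (H k x)) →
    deltaKeyUniform (fun k y => ∑ x, if H k x = y then ρ k x else 0) ≤
      (ν/2) * Real.sqrt (guessProbC (fun x y => ∑ k, if H k x = y then ρ k x else 0) *
        (Fintype.card Y))

/-!
Write `w i = Π_i v` and `c δ = max_i ‖Π_i Π_{i+δ}‖`. Since `Π_i` is a self-adjoint idempotent,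
`⟪w i, w j⟫ = ⟪w i, Π_i Π_j w j⟫`, so `|⟪w i, w (i + δ)⟫| ≤ c δ ‖w i‖ ‖w (i + δ)‖`. Expanding
`‖∑ w i‖²` along the diagonals `j = i + δ` and using `ab ≤ (a² + b²)/2` together with the
translation invariance of `∑ i, ‖w i‖²` gives `‖∑ w i‖² ≤ (∑ c δ) ∑ ‖w i‖²`, while
`∑ ‖w i‖² = re ⟪v, ∑ w i⟫ ≤ ‖v‖ ‖∑ w i‖`.
-/
open scoped InnerProductSpace
open RCLike

theorem Fintype.sum_sum_eq_sum_sum_add {I M : Type*} [Fintype I] [AddGroup I] [AddCommMonoid M]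
    (F : I → I → M) : ∑ i, ∑ j, F i j = ∑ δ, ∑ i, F i (i + δ) := by
  calc ∑ i, ∑ j, F i j = ∑ i, ∑ δ, F i (i + δ) :=
        Fintype.sum_congr _ _ fun i => (Equiv.sum_comp (Equiv.addLeft i) (F i)).symm
    _ = ∑ δ, ∑ i, F i (i + δ) := Finset.sum_comm

theorem Fintype.sum_mul_comp_add_le_sum_sq {I : Type*} [Fintype I] [AddGroup I] (a : I → ℝ)
    (δ : I) : ∑ i, a i * a (i + δ) ≤ ∑ i, a i ^ 2 := by
  have hshift : ∑ i, a (i + δ) ^ 2 = ∑ i, a i ^ 2 := Equiv.sum_comp (Equiv.addRight δ) (a · ^ 2)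
  calc ∑ i, a i * a (i + δ) ≤ ∑ i, (a i ^ 2 + a (i + δ) ^ 2) / 2 :=
        Finset.sum_le_sum fun i _ => by nlinarith [sq_nonneg (a i - a (i + δ))]
    _ = ∑ i, a i ^ 2 := by rw [← Finset.sum_div, Finset.sum_add_distrib, hshift]; ring

section

variable {𝕜 E : Type*} [RCLike 𝕜] [NormedAddCommGroup E] [InnerProductSpace 𝕜 E]

theorem norm_sum_sq_le_of_norm_inner_le {I : Type*} [Fintype I] [AddGroup I] (w : I → E)
    (c : I → ℝ) (hc : ∀ δ, 0 ≤ c δ)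
    (h : ∀ i δ, ‖⟪w i, w (i + δ)⟫_𝕜‖ ≤ c δ * (‖w i‖ * ‖w (i + δ)‖)) :
    ‖∑ i, w i‖ ^ 2 ≤ (∑ δ, c δ) * ∑ i, ‖w i‖ ^ 2 := by
  calc ‖∑ i, w i‖ ^ 2 = ∑ i, ∑ j, re ⟪w i, w j⟫_𝕜 := by
        rw [← inner_self_eq_norm_sq (𝕜 := 𝕜), sum_inner, map_sum]
        simp only [inner_sum, map_sum]
    _ = ∑ δ, ∑ i, re ⟪w i, w (i + δ)⟫_𝕜 := Fintype.sum_sum_eq_sum_sum_add _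
    _ ≤ ∑ δ, c δ * ∑ i, ‖w i‖ * ‖w (i + δ)‖ := by
        refine Finset.sum_le_sum fun δ _ => ?_
        rw [Finset.mul_sum]
        exact Finset.sum_le_sum fun i _ => (re_le_norm _).trans (h i δ)
    _ ≤ ∑ δ, c δ * ∑ i, ‖w i‖ ^ 2 := Finset.sum_le_sum fun δ _ =>
        mul_le_mul_of_nonneg_left (Fintype.sum_mul_comp_add_le_sum_sq _ δ) (hc δ)
    _ = (∑ δ, c δ) * ∑ i, ‖w i‖ ^ 2 := (Finset.sum_mul ..).symm

variable [CompleteSpace E]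

theorem IsStarProjection.apply_apply {p : E →L[𝕜] E} (hp : IsStarProjection p) (x : E) :
    p (p x) = p x :=
  congr($(hp.isIdempotentElem.eq) x)

theorem IsStarProjection.inner_apply_left {p : E →L[𝕜] E} (hp : IsStarProjection p) (x y : E) :
    ⟪p x, y⟫_𝕜 = ⟪x, p y⟫_𝕜 :=
  hp.isSelfAdjoint.isSymmetric x y

theorem IsStarProjection.re_inner_apply_self {p : E →L[𝕜] E} (hp : IsStarProjection p) (x : E) :
    re ⟪x, p x⟫_𝕜 = ‖p x‖ ^ 2 := by
  rw [← hp.apply_apply, ← hp.inner_apply_left, hp.apply_apply, inner_self_eq_norm_sq]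

theorem IsStarProjection.norm_inner_apply_le {p q : E →L[𝕜] E} (hp : IsStarProjection p)
    (hq : IsStarProjection q) (x y : E) :
    ‖⟪p x, q y⟫_𝕜‖ ≤ ‖p * q‖ * (‖p x‖ * ‖q y‖) := by
  have hpq : ⟪p x, q y⟫_𝕜 = ⟪p x, (p * q) (q y)⟫_𝕜 := calc
    ⟪p x, q y⟫_𝕜 = ⟪p (p x), q (q y)⟫_𝕜 := by rw [hp.apply_apply, hq.apply_apply]
    _ = ⟪p x, (p * q) (q y)⟫_𝕜 := hp.inner_apply_left _ _
  calc ‖⟪p x, q y⟫_𝕜‖ ≤ ‖p x‖ * ‖(p * q) (q y)‖ := hpq ▸ norm_inner_le_norm _ _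
    _ ≤ ‖p x‖ * (‖p * q‖ * ‖q y‖) := by gcongr; exact (p * q).le_opNorm _
    _ = ‖p * q‖ * (‖p x‖ * ‖q y‖) := by ring

theorem ContinuousLinearMap.norm_sum_le_sum_iSup_norm_mul_comp_add {I : Type*} [Fintype I]
    [AddGroup I] (T : I → E →L[𝕜] E) (hT : ∀ i, IsStarProjection (T i)) :
    ‖∑ i, T i‖ ≤ ∑ δ, ⨆ i, ‖T i * T (i + δ)‖ := by
  set c : I → ℝ := fun δ => ⨆ i, ‖T i * T (i + δ)‖
  have hc : ∀ δ, 0 ≤ c δ := fun δ => Real.iSup_nonneg fun i => norm_nonneg _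
  have hcle : ∀ i δ, ‖T i * T (i + δ)‖ ≤ c δ := fun i δ =>
    le_ciSup (f := fun i => ‖T i * T (i + δ)‖) (Set.finite_range _).bddAbove i
  have hC : 0 ≤ ∑ δ, c δ := Finset.sum_nonneg fun δ _ => hc δ
  refine opNorm_le_bound _ hC fun v => ?_
  set u := (∑ i, T i) v
  have hu : u = ∑ i, T i v := sum_apply ..
  have hsq : ‖u‖ ^ 2 ≤ (∑ δ, c δ) * ∑ i, ‖T i v‖ ^ 2 :=
    hu ▸ norm_sum_sq_le_of_norm_inner_le _ c hc fun i δ =>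
      ((hT i).norm_inner_apply_le (hT (i + δ)) v v).trans <| by
        gcongr; exact hcle i δ
  have hsum_sq : ∑ i, ‖T i v‖ ^ 2 ≤ ‖v‖ * ‖u‖ := calc
    ∑ i, ‖T i v‖ ^ 2 = re ⟪v, u⟫_𝕜 := by
      simp only [hu, inner_sum, map_sum, (hT _).re_inner_apply_self]
    _ ≤ ‖v‖ * ‖u‖ := (re_le_norm _).trans (norm_inner_le_norm _ _)
  nlinarith [mul_le_mul_of_nonneg_left hsum_sq hC, mul_nonneg hC (norm_nonneg v)]

end

/-- for a finite family of orthogonal projections indexed by an abelian group,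
`‖Σ_i Π_i‖ ≤ Σ_δ max_i ‖Π_i Π_{i+δ}‖`. -/
theorem projection_sum_opNorm_bound {I E : Type} [Fintype I] [AddCommGroup I]
    [Fintype E] [DecidableEq E]
    (P : I → Matrix E E ℂ) (hP : ∀ i, IsProjection (P i)) :
    opNorm (∑ i, P i) ≤ ∑ δ : I, ⨆ i : I, opNorm (P i * P (i + δ)) := by
  have hT : ∀ i, IsStarProjection (toEuclideanCLM (𝕜 := ℂ) (P i)) := fun i =>
    (⟨(hP i).2, (hP i).1.isSelfAdjoint⟩ : IsStarProjection (P i)).map _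
  simpa only [opNorm, map_sum, map_mul] using
    ContinuousLinearMap.norm_sum_le_sum_iSup_norm_mul_comp_add _ hT
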